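/- arXiv:1910.04308 — 2 statements merged into one kernel-verified Lean document; each statement's English description precedes it below -/
import Mathlib

section
/- Let (X, ω_X, μ_X) and (Y, ω_Y, μ_Y) be finite measure networks, μ an optimal coupling, and γ(t) = (X × Y, (1−t) ω_X + t ω_Y, μ) the interpolation path. Then for s, t ∈ [0,1], d(γ(s), γ(t)) ≤ |t − s| · d(X, Y), where d is the Gromov–Wasserstein distance. (Upper bound half of the geodesic property: the coupling induced by the diagonal on (X×Y)² yields distortion |t−s| dis(μ).) -/
open Finset

/-- A coupling of the probability vectors `μX` and `μY`: nonnegative entries with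
marginals `μX` and `μY`. -/
def IsCoupling {α β : Type*} [Fintype α] [Fintype β]
    (μX : α → ℝ) (μY : β → ℝ) (C : α → β → ℝ) : Prop :=
  (∀ x y, 0 ≤ C x y) ∧ (∀ x, ∑ y, C x y = μX x) ∧ (∀ y, ∑ x, C x y = μY y)

/-- The squared distortion of a coupling `C` between the weight functions `ωX` and `ωY`. -/
def disSq {α β : Type*} [Fintype α] [Fintype β]
    (ωX : α → α → ℝ) (ωY : β → β → ℝ) (C : α → β → ℝ) : ℝ :=
  ∑ x, ∑ x', ∑ y, ∑ y', (ωX x x' - ωY y y')^2 * C x y * C x' y'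

/-- The Gromov–Wasserstein distance between finite measure networks
`(α, ωX, μX)` and `(β, ωY, μY)`. -/
noncomputable def GW {α β : Type*} [Fintype α] [Fintype β]
    (ωX : α → α → ℝ) (μX : α → ℝ) (ωY : β → β → ℝ) (μY : β → ℝ) : ℝ :=
  (1/2) * sInf {r | ∃ C, IsCoupling μX μY C ∧ r = Real.sqrt (disSq ωX ωY C)}

/-! Couple `γ(s)` and `γ(t)` by the diagonal of `X × Y`, weighted by `μ`. Its distortion only sees
`((1-s) ωX + s ωY) - ((1-t) ωX + t ωY) = (t - s) (ωX - ωY)`, so it is `|t - s|` times the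
distortion of the optimal coupling `μ`. -/

theorem GW_le_of_isCoupling {α β : Type*} [Fintype α] [Fintype β]
    {ωX : α → α → ℝ} {μX : α → ℝ} {ωY : β → β → ℝ} {μY : β → ℝ} {C : α → β → ℝ}
    (hC : IsCoupling μX μY C) :
    GW ωX μX ωY μY ≤ (1/2) * Real.sqrt (disSq ωX ωY C) := by
  have hbdd : BddBelow {r | ∃ C, IsCoupling μX μY C ∧ r = Real.sqrt (disSq ωX ωY C)} :=
    ⟨0, by rintro r ⟨C, -, rfl⟩; exact Real.sqrt_nonneg _⟩
  exact mul_le_mul_of_nonneg_left (csInf_le hbdd ⟨C, hC, rfl⟩) (by norm_num)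

section Diagonal

variable {γ : Type*} [Fintype γ] [DecidableEq γ]

theorem isCoupling_diagonal {m : γ → ℝ} (hm : ∀ p, 0 ≤ m p) :
    IsCoupling m m (Matrix.diagonal m) := by
  refine ⟨fun p q => ?_, fun p => ?_, fun q => ?_⟩
  · by_cases h : p = q <;> simp [h, hm]
  · simp [Matrix.diagonal_apply]
  · simp [Matrix.diagonal_apply]

theorem disSq_diagonal (ω ω' : γ → γ → ℝ) (m : γ → ℝ) :
    disSq ω ω' (Matrix.diagonal m) = ∑ p, ∑ q, (ω p q - ω' p q)^2 * m p * m q := by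
  simp [disSq, Matrix.diagonal_apply, mul_ite, ite_mul]

end Diagonal

theorem disSq_eq_sum_prod {α β : Type*} [Fintype α] [Fintype β]
    (ωX : α → α → ℝ) (ωY : β → β → ℝ) (μ : α → β → ℝ) :
    disSq ωX ωY μ =
      ∑ p : α × β, ∑ q : α × β, (ωX p.1 q.1 - ωY p.2 q.2)^2 * μ p.1 p.2 * μ q.1 q.2 := by
  simp only [disSq, Fintype.sum_prod_type]
  exact sum_congr rfl fun x _ => sum_comm

theorem gw_geodesic_upper_bound_general {α β : Type*} [Fintype α] [Fintype β]
    (ωX : α → α → ℝ) (μX : α → ℝ) (ωY : β → β → ℝ) (μY : β → ℝ)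
    (μ : α → β → ℝ) (hμ : IsCoupling μX μY μ)
    (hopt : GW ωX μX ωY μY = (1/2) * Real.sqrt (disSq ωX ωY μ)) :
    ∀ s t : ℝ, s ∈ Set.Icc (0:ℝ) 1 → t ∈ Set.Icc (0:ℝ) 1 →
      GW (fun p q : α × β => (1 - s) * ωX p.1 q.1 + s * ωY p.2 q.2)
          (fun p : α × β => μ p.1 p.2)
          (fun p q : α × β => (1 - t) * ωX p.1 q.1 + t * ωY p.2 q.2)
          (fun p : α × β => μ p.1 p.2)
        ≤ |t - s| * GW ωX μX ωY μY := by
  intro s t _ _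
  classical
  have hdis : disSq (fun p q : α × β => (1 - s) * ωX p.1 q.1 + s * ωY p.2 q.2)
      (fun p q : α × β => (1 - t) * ωX p.1 q.1 + t * ωY p.2 q.2)
      (Matrix.diagonal fun p : α × β => μ p.1 p.2) = (t - s)^2 * disSq ωX ωY μ := by
    rw [disSq_diagonal, disSq_eq_sum_prod, mul_sum]
    refine sum_congr rfl fun p _ => ?_
    rw [mul_sum]
    exact sum_congr rfl fun q _ => by ring
  calc _ ≤ (1/2) * Real.sqrt ((t - s)^2 * disSq ωX ωY μ) :=
        hdis ▸ GW_le_of_isCoupling (isCoupling_diagonal fun p => hμ.1 p.1 p.2)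
    _ = |t - s| * GW ωX μX ωY μY := by
        rw [hopt, Real.sqrt_mul (sq_nonneg _), Real.sqrt_sq_eq_abs]; ring

/-- Upper bound half of the geodesic property: with `μ` an optimal coupling
and `γ(t) = (α × β, (1−t) ωX + t ωY, μ)`, for `s, t ∈ [0,1]` one has
`d(γ(s), γ(t)) ≤ |t − s| · d(X, Y)`. -/
theorem gw_geodesic_upper_bound {α β : Type*} [Fintype α] [Fintype β]
    (ωX : α → α → ℝ) (μX : α → ℝ) (ωY : β → β → ℝ) (μY : β → ℝ)
    (hμX0 : ∀ x, 0 < μX x) (hμX1 : ∑ x, μX x = 1)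
    (hμY0 : ∀ y, 0 < μY y) (hμY1 : ∑ y, μY y = 1)
    (μ : α → β → ℝ) (hμ : IsCoupling μX μY μ)
    (hopt : GW ωX μX ωY μY = (1/2) * Real.sqrt (disSq ωX ωY μ)) :
    ∀ s t : ℝ, s ∈ Set.Icc (0:ℝ) 1 → t ∈ Set.Icc (0:ℝ) 1 →
      GW (fun p q : α × β => (1 - s) * ωX p.1 q.1 + s * ωY p.2 q.2)
          (fun p : α × β => μ p.1 p.2)
          (fun p q : α × β => (1 - t) * ωX p.1 q.1 + t * ωY p.2 q.2)
          (fun p : α × β => μ p.1 p.2)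
        ≤ |t - s| * GW ωX μX ωY μY :=
  gw_geodesic_upper_bound_general ωX μX ωY μY μ hμ hopt
end

section
/- The Gromov–Wasserstein distance on finite measure networks satisfies the triangle inequality: for finite measure networks X, Y, Z, d(X, Z) ≤ d(X, Y) + d(Y, Z), where d(X,Y) = (1/2) min over couplings μ of (∑_{x,x',y,y'} (ω_X(x,x') − ω_Y(y,y'))² μ(x,y) μ(x',y'))^{1/2}. -/
/-!
Given couplings `C₁` of `(X, Y)` and `C₂` of `(Y, Z)`, glue them along `μY` into the measure
`P(x, y, z) = C₁(x, y) C₂(y, z) / μY(y)` on `X × Y × Z`. Its `(x, y)`- and `(y, z)`-marginals are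
`C₁` and `C₂`, and its `(x, z)`-marginal `ν` is a coupling of `(X, Z)`. All three distortions are
then squared `L²(P ⊗ P)` norms, of `ωX - ωY`, `ωY - ωZ` and their sum `ωX - ωZ`, so Minkowski's
inequality gives `√dis(ν) ≤ √dis(C₁) + √dis(C₂)`; taking infima proves the theorem.
-/

open Finset

lemma sqrt_sum_add_sq_mul_le {ι : Type*} [Fintype ι] (f g w : ι → ℝ) (hw : ∀ i, 0 ≤ w i) :
    √(∑ i, (f i + g i) ^ 2 * w i) ≤ √(∑ i, f i ^ 2 * w i) + √(∑ i, g i ^ 2 * w i) := by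
  have hnorm : ∀ h : ι → ℝ,
      ‖WithLp.toLp 2 (fun i => h i * √(w i))‖ = √(∑ i, h i ^ 2 * w i) := fun h => by
    simp only [EuclideanSpace.norm_eq, Real.norm_eq_abs, sq_abs, mul_pow, Real.sq_sqrt (hw _)]
  rw [← hnorm f, ← hnorm g, ← hnorm fun i => f i + g i]
  refine le_of_eq_of_le (congrArg norm ?_) (norm_add_le _ _)
  ext i
  simp [add_mul]

-- `hQ` says that `Q` is the pushforward of the weights `P` along `π`.
lemma sum_prod_comp_mul_eq {ι κ : Type*} [Fintype ι] [Fintype κ] (π : ι → κ) {P : ι → ℝ} {Q : κ → ℝ}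
    (hQ : ∀ f : κ → ℝ, ∑ i, f (π i) * P i = ∑ k, f k * Q k) (F : κ → κ → ℝ) :
    ∑ p : ι × ι, F (π p.1) (π p.2) * (P p.1 * P p.2) =
      ∑ q : κ × κ, F q.1 q.2 * (Q q.1 * Q q.2) := by
  calc ∑ p : ι × ι, F (π p.1) (π p.2) * (P p.1 * P p.2)
      = ∑ i, (∑ j, F (π i) (π j) * P j) * P i := by
        rw [Fintype.sum_prod_type]
        simp only [sum_mul]
        exact sum_congr rfl fun _ _ => sum_congr rfl fun _ _ => by ring
    _ = ∑ i, (∑ l, F (π i) l * Q l) * P i := by simp only [hQ]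
    _ = ∑ k, (∑ l, F k l * Q l) * Q k := hQ fun k => ∑ l, F k l * Q l
    _ = ∑ q : κ × κ, F q.1 q.2 * (Q q.1 * Q q.2) := by
        rw [Fintype.sum_prod_type]
        simp only [sum_mul]
        exact sum_congr rfl fun _ _ => sum_congr rfl fun _ _ => by ring

section Distortion

variable {α β : Type*} [Fintype α] [Fintype β]

lemma disSq_eq_sum_prod_s16 (ωX : α → α → ℝ) (ωY : β → β → ℝ) (C : α → β → ℝ) :
    disSq ωX ωY C = ∑ q : (α × β) × (α × β),
      (ωX q.1.1 q.2.1 - ωY q.1.2 q.2.2) ^ 2 * (C q.1.1 q.1.2 * C q.2.1 q.2.2) := by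
  simp only [disSq, Fintype.sum_prod_type, ← mul_assoc]
  exact sum_congr rfl fun _ _ => sum_comm

lemma disSq_eq_of_sum_comp_mul {ι : Type*} [Fintype ι] (ωX : α → α → ℝ) (ωY : β → β → ℝ)
    {C : α → β → ℝ} (π : ι → α × β) {P : ι → ℝ}
    (hC : ∀ f : α × β → ℝ, ∑ i, f (π i) * P i = ∑ q, f q * C q.1 q.2) :
    disSq ωX ωY C = ∑ p : ι × ι,
      (ωX (π p.1).1 (π p.2).1 - ωY (π p.1).2 (π p.2).2) ^ 2 * (P p.1 * P p.2) := by
  rw [disSq_eq_sum_prod_s16, sum_prod_comp_mul_eq π hC fun a b => (ωX a.1 b.1 - ωY a.2 b.2) ^ 2]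

end Distortion

section Marginals

variable {α β γ : Type*} [Fintype α] [Fintype β] [Fintype γ] (P : α × β × γ → ℝ)

lemma sum_comp_mul_eq_marginal₁₂ (f : α × β → ℝ) :
    ∑ t, f (t.1, t.2.1) * P t = ∑ q : α × β, f q * ∑ z, P (q.1, q.2, z) := by
  simp only [Fintype.sum_prod_type, mul_sum]

lemma sum_comp_mul_eq_marginal₂₃ (f : β × γ → ℝ) :
    ∑ t, f t.2 * P t = ∑ q : β × γ, f q * ∑ x, P (x, q.1, q.2) := by
  simp only [Fintype.sum_prod_type, mul_sum]
  rw [sum_comm]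
  exact sum_congr rfl fun _ _ => sum_comm

lemma sum_comp_mul_eq_marginal₁₃ (f : α × γ → ℝ) :
    ∑ t, f (t.1, t.2.2) * P t = ∑ q : α × γ, f q * ∑ y, P (q.1, y, q.2) := by
  simp only [Fintype.sum_prod_type, mul_sum]
  exact sum_congr rfl fun _ _ => sum_comm

end Marginals

section Gluing

variable {α β γ : Type*} {μX : α → ℝ} {μY : β → ℝ} {μZ : γ → ℝ}
  {C₁ : α → β → ℝ} {C₂ : β → γ → ℝ}

noncomputable def glue (μY : β → ℝ) (C₁ : α → β → ℝ) (C₂ : β → γ → ℝ) (t : α × β × γ) : ℝ :=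
  C₁ t.1 t.2.1 * C₂ t.2.1 t.2.2 / μY t.2.1

noncomputable def couplingComp [Fintype β] (μY : β → ℝ) (C₁ : α → β → ℝ) (C₂ : β → γ → ℝ)
    (x : α) (z : γ) : ℝ :=
  ∑ y, glue μY C₁ C₂ (x, y, z)

lemma glue_nonneg [Fintype α] [Fintype β] [Fintype γ] (hμY : ∀ y, 0 < μY y)
    (hC₁ : IsCoupling μX μY C₁) (hC₂ : IsCoupling μY μZ C₂) (t : α × β × γ) :
    0 ≤ glue μY C₁ C₂ t :=
  div_nonneg (mul_nonneg (hC₁.1 _ _) (hC₂.1 _ _)) (hμY _).le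

lemma sum_glue_right [Fintype β] [Fintype γ] (hμY : ∀ y, 0 < μY y)
    (hC₂ : IsCoupling μY μZ C₂) (x : α) (y : β) :
    ∑ z, glue μY C₁ C₂ (x, y, z) = C₁ x y := by
  simp only [glue, ← sum_div, ← mul_sum, hC₂.2.1 y, mul_div_cancel_right₀ _ (hμY y).ne']

lemma sum_glue_left [Fintype α] [Fintype β] (hμY : ∀ y, 0 < μY y)
    (hC₁ : IsCoupling μX μY C₁) (y : β) (z : γ) :
    ∑ x, glue μY C₁ C₂ (x, y, z) = C₂ y z := by
  simp only [glue, ← sum_div, ← sum_mul, hC₁.2.2 y, mul_div_cancel_left₀ _ (hμY y).ne']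

lemma IsCoupling.comp [Fintype α] [Fintype β] [Fintype γ] (hμY : ∀ y, 0 < μY y)
    (hC₁ : IsCoupling μX μY C₁) (hC₂ : IsCoupling μY μZ C₂) :
    IsCoupling μX μZ (couplingComp μY C₁ C₂) := by
  refine ⟨fun x z => sum_nonneg fun y _ => glue_nonneg hμY hC₁ hC₂ _, fun x => ?_, fun z => ?_⟩
  · exact sum_comm.trans ((sum_congr rfl fun y _ => sum_glue_right hμY hC₂ x y).trans (hC₁.2.1 x))
  · exact sum_comm.trans ((sum_congr rfl fun y _ => sum_glue_left hμY hC₁ y z).trans (hC₂.2.2 z))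

end Gluing

lemma sqrt_disSq_couplingComp_le {α β γ : Type*} [Fintype α] [Fintype β] [Fintype γ]
    {μX : α → ℝ} {μY : β → ℝ} {μZ : γ → ℝ} {C₁ : α → β → ℝ} {C₂ : β → γ → ℝ}
    (ωX : α → α → ℝ) (ωY : β → β → ℝ) (ωZ : γ → γ → ℝ) (hμY : ∀ y, 0 < μY y)
    (hC₁ : IsCoupling μX μY C₁) (hC₂ : IsCoupling μY μZ C₂) :
    √(disSq ωX ωZ (couplingComp μY C₁ C₂)) ≤ √(disSq ωX ωY C₁) + √(disSq ωY ωZ C₂) := by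
  set P := glue μY C₁ C₂
  rw [disSq_eq_of_sum_comp_mul ωX ωZ (fun t => (t.1, t.2.2)) (P := P) fun f => by
      rw [sum_comp_mul_eq_marginal₁₃]; rfl,
    disSq_eq_of_sum_comp_mul ωX ωY (fun t => (t.1, t.2.1)) (P := P) fun f => by
      simp only [sum_comp_mul_eq_marginal₁₂, P, sum_glue_right hμY hC₂],
    disSq_eq_of_sum_comp_mul ωY ωZ (fun t => t.2) (P := P) fun f => by
      simp only [sum_comp_mul_eq_marginal₂₃, P, sum_glue_left hμY hC₁]]
  refine le_of_eq_of_le (congrArg Real.sqrt (sum_congr rfl fun p _ => ?_))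
    (sqrt_sum_add_sq_mul_le _ _ _ fun p => mul_nonneg (glue_nonneg hμY hC₁ hC₂ p.1)
      (glue_nonneg hμY hC₁ hC₂ p.2))
  ring

lemma isCoupling_mul {α β : Type*} [Fintype α] [Fintype β] {μX : α → ℝ} {μY : β → ℝ}
    (hμX0 : ∀ x, 0 ≤ μX x) (hμX1 : ∑ x, μX x = 1) (hμY0 : ∀ y, 0 ≤ μY y)
    (hμY1 : ∑ y, μY y = 1) : IsCoupling μX μY fun x y => μX x * μY y :=
  ⟨fun x y => mul_nonneg (hμX0 x) (hμY0 y), fun x => by rw [← mul_sum, hμY1, mul_one],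
    fun y => by rw [← sum_mul, hμX1, one_mul]⟩

lemma csInf_le_csInf_add {S A B : Set ℝ} (hS : BddBelow S) (hA : A.Nonempty) (hA' : BddBelow A)
    (hB : B.Nonempty) (hB' : BddBelow B) (h : ∀ a ∈ A, ∀ b ∈ B, ∃ c ∈ S, c ≤ a + b) :
    sInf S ≤ sInf A + sInf B := by
  rw [← csInf_add hA hA' hB hB']
  refine le_csInf (hA.add hB) ?_
  rintro _ ⟨a, ha, b, hb, rfl⟩
  obtain ⟨c, hc, hcab⟩ := h a ha b hb
  exact (csInf_le hS hc).trans hcab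

lemma bddBelow_sqrt_disSq {α β : Type*} [Fintype α] [Fintype β] (ωX : α → α → ℝ)
    (μX : α → ℝ) (ωY : β → β → ℝ) (μY : β → ℝ) :
    BddBelow {r | ∃ C, IsCoupling μX μY C ∧ r = √(disSq ωX ωY C)} :=
  ⟨0, by rintro _ ⟨C, -, rfl⟩; exact Real.sqrt_nonneg _⟩

lemma nonempty_sqrt_disSq {α β : Type*} [Fintype α] [Fintype β] (ωX : α → α → ℝ)
    {μX : α → ℝ} (ωY : β → β → ℝ) {μY : β → ℝ} (hμX0 : ∀ x, 0 ≤ μX x) (hμX1 : ∑ x, μX x = 1)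
    (hμY0 : ∀ y, 0 ≤ μY y) (hμY1 : ∑ y, μY y = 1) :
    {r | ∃ C, IsCoupling μX μY C ∧ r = √(disSq ωX ωY C)}.Nonempty :=
  ⟨_, _, isCoupling_mul hμX0 hμX1 hμY0 hμY1, rfl⟩

/-- The Gromov–Wasserstein distance on finite measure networks satisfies the
triangle inequality: `d(X, Z) ≤ d(X, Y) + d(Y, Z)`. -/
theorem gw_triangle_inequality {α β γ : Type*} [Fintype α] [Fintype β] [Fintype γ]
    (ωX : α → α → ℝ) (μX : α → ℝ)
    (ωY : β → β → ℝ) (μY : β → ℝ)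
    (ωZ : γ → γ → ℝ) (μZ : γ → ℝ)
    (hμX0 : ∀ x, 0 < μX x) (hμX1 : ∑ x, μX x = 1)
    (hμY0 : ∀ y, 0 < μY y) (hμY1 : ∑ y, μY y = 1)
    (hμZ0 : ∀ z, 0 < μZ z) (hμZ1 : ∑ z, μZ z = 1) :
    GW ωX μX ωZ μZ ≤ GW ωX μX ωY μY + GW ωY μY ωZ μZ := by
  have key := csInf_le_csInf_add (bddBelow_sqrt_disSq ωX μX ωZ μZ)
    (nonempty_sqrt_disSq ωX ωY (fun x => (hμX0 x).le) hμX1 (fun y => (hμY0 y).le) hμY1)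
    (bddBelow_sqrt_disSq ωX μX ωY μY)
    (nonempty_sqrt_disSq ωY ωZ (fun y => (hμY0 y).le) hμY1 (fun z => (hμZ0 z).le) hμZ1)
    (bddBelow_sqrt_disSq ωY μY ωZ μZ) (by
      rintro _ ⟨C₁, hC₁, rfl⟩ _ ⟨C₂, hC₂, rfl⟩
      exact ⟨_, ⟨_, hC₁.comp hμY0 hC₂, rfl⟩, sqrt_disSq_couplingComp_le ωX ωY ωZ hμY0 hC₁ hC₂⟩)
  rw [GW, GW, GW]
  linarith
end
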